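/- arXiv:1812.05047 — 6 statements merged into one kernel-verified Lean document; each statement's English description precedes it below -/
import Mathlib

section
/- Suppose an N-partition {Γ̃_k} of Γ minimizes F_{λ₁} and F_{λ₂} for two values 0 ≤ λ₁ < λ₂ ≤ 1. Then exactly one of the following alternatives holds: (i) for every λ ∈ (λ₁, λ₂), {Γ̃_k} is the unique minimizer of F_λ (unique up to equality of the induced vertex partitions); or (ii) there exists another N-partition {Γ̂_k}, with a different vertex partition, such that F_λ({Γ̂_k}) = F_λ({Γ̃_k}) for all λ ∈ [0,1]. -/
open Finset

namespace Districting

variable {V : Type*} [Fintype V] [DecidableEq V]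

/-- An `N`-partition of a graph `G`: a family of `N` pairwise disjoint sets of
vertexes covering all of `V`, each inducing a connected subgraph of `G`. -/
structure Partition (G : SimpleGraph V) (N : ℕ) where
  part : Fin N → Finset V
  disj : ∀ k l, k ≠ l → Disjoint (part k) (part l)
  covers : ∀ v : V, ∃ k, v ∈ part k
  connected : ∀ k, (G.induce (part k : Set V)).Connected

/-- The mass of a set of vertexes w.r.t. the vertex weight `f`. -/
def mass (f : V → ℝ) (s : Finset V) : ℝ := ∑ v ∈ s, f v

/-- The total mass of the graph w.r.t. the vertex weight `f`. -/
def totalMass (f : V → ℝ) : ℝ := ∑ v : V, f v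

open Classical in
/-- The cut (perimeter) energy of a partition: the sum of the weights of edges
whose endpoints lie in different parts. -/
noncomputable def cutEnergy (G : SimpleGraph V) (g : Sym2 V → ℝ) {N : ℕ}
    (P : Partition G N) : ℝ :=
  ∑ e : Sym2 V,
    if e ∈ G.edgeSet ∧ ∀ k, ¬ (∀ v ∈ e, v ∈ P.part k) then g e else 0

/-- The deviation energy of a partition: the standard deviation of the masses
from the mean mass. -/
noncomputable def deviation {G : SimpleGraph V} (f : V → ℝ) {N : ℕ}
    (P : Partition G N) : ℝ :=
  Real.sqrt (∑ k : Fin N, (mass f (P.part k) - totalMass f / (N : ℝ)) ^ 2)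

/-- The energy functional `F_λ`. -/
noncomputable def energy (G : SimpleGraph V) (f : V → ℝ) (g : Sym2 V → ℝ)
    (lam : ℝ) {N : ℕ} (P : Partition G N) : ℝ :=
  lam * cutEnergy G g P + (1 - lam) * deviation f P

end Districting

namespace Districting

/-- if an `N`-partition minimizes `F_{λ₁}` and `F_{λ₂}` for
`0 ≤ λ₁ < λ₂ ≤ 1`, then exactly one of the following holds: (i) for every
`λ ∈ (λ₁, λ₂)` it is the unique minimizer of `F_λ` (up to equality of the induced
vertex partitions); or (ii) there is another `N`-partition, with a different
vertex partition, having the same energy for all `λ ∈ [0,1]`. -/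
theorem uniqueness_dichotomy
    {V : Type*} [Fintype V] [DecidableEq V]
    (G : SimpleGraph V) (hG : G.Connected)
    (f : V → ℝ) (hf : ∀ v, 0 < f v)
    (g : Sym2 V → ℝ) (hg : ∀ e ∈ G.edgeSet, 0 < g e)
    (N : ℕ) (lam₁ lam₂ : ℝ)
    (h₀ : 0 ≤ lam₁) (h₁₂ : lam₁ < lam₂) (h₁ : lam₂ ≤ 1)
    (T : Partition G N)
    (hmin₁ : ∀ Q : Partition G N, energy G f g lam₁ T ≤ energy G f g lam₁ Q)
    (hmin₂ : ∀ Q : Partition G N, energy G f g lam₂ T ≤ energy G f g lam₂ Q) :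
    Xor'
      (∀ lam : ℝ, lam₁ < lam → lam < lam₂ →
        ∀ Q : Partition G N,
          (∀ R : Partition G N, energy G f g lam Q ≤ energy G f g lam R) →
          Set.range Q.part = Set.range T.part)
      (∃ Q : Partition G N, Set.range Q.part ≠ Set.range T.part ∧
        ∀ lam ∈ Set.Icc (0 : ℝ) 1, energy G f g lam Q = energy G f g lam T) := by
  classical
  have haff : ∀ (lam t : ℝ) (Q : Partition G N), lam = t * lam₁ + (1 - t) * lam₂ →
      energy G f g lam Q = t * energy G f g lam₁ Q + (1 - t) * energy G f g lam₂ Q := by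
    intro lam t Q h
    simp only [energy]
    subst h; ring
  have hd : lam₂ - lam₁ ≠ 0 := by linarith
  have hTmid : ∀ lam, lam₁ ≤ lam → lam ≤ lam₂ →
      ∀ Q : Partition G N, energy G f g lam T ≤ energy G f g lam Q := by
    intro lam hl hr Q
    set t := (lam₂ - lam) / (lam₂ - lam₁) with ht
    have hlam : lam = t * lam₁ + (1 - t) * lam₂ := by
      rw [ht]; field_simp; ring
    have ht0 : 0 ≤ t := div_nonneg (by linarith) (by linarith)
    have ht1 : t ≤ 1 := by
      rw [ht, div_le_one (by linarith)]; linarith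
    rw [haff lam t T hlam, haff lam t Q hlam]
    nlinarith [hmin₁ Q, hmin₂ Q]
  by_cases hB : ∃ Q : Partition G N, Set.range Q.part ≠ Set.range T.part ∧
      ∀ lam ∈ Set.Icc (0 : ℝ) 1, energy G f g lam Q = energy G f g lam T
  · refine Or.inr ⟨hB, ?_⟩
    intro hA
    obtain ⟨Q, hne, heq⟩ := hB
    set lam := (lam₁ + lam₂) / 2 with hlamdef
    have hl1 : lam₁ < lam := by rw [hlamdef]; linarith
    have hl2 : lam < lam₂ := by rw [hlamdef]; linarith
    have hQmin : ∀ R : Partition G N, energy G f g lam Q ≤ energy G f g lam R := by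
      intro R
      rw [heq lam ⟨by linarith, by linarith⟩]
      exact hTmid lam hl1.le hl2.le R
    exact hne (hA lam hl1 hl2 Q hQmin)
  · refine Or.inl ⟨?_, hB⟩
    intro lam hl1 hl2 Q hQmin
    by_contra hne
    apply hB
    refine ⟨Q, hne, ?_⟩
    have hTQ : energy G f g lam T = energy G f g lam Q :=
      le_antisymm (hTmid lam hl1.le hl2.le Q) (hQmin T)
    set t := (lam₂ - lam) / (lam₂ - lam₁) with ht
    have hlam : lam = t * lam₁ + (1 - t) * lam₂ := by
      rw [ht]; field_simp; ring
    have ht0 : 0 < t := div_pos (by linarith) (by linarith)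
    have ht1 : t < 1 := by
      rw [ht, div_lt_one (by linarith)]; linarith
    have haffT := haff lam t T hlam
    have haffQ := haff lam t Q hlam
    have e1 : energy G f g lam₁ Q = energy G f g lam₁ T := by
      nlinarith [hmin₁ Q, hmin₂ Q]
    have e2 : energy G f g lam₂ Q = energy G f g lam₂ T := by
      nlinarith [hmin₁ Q, hmin₂ Q]
    intro mu _
    simp only [energy] at e1 e2 ⊢
    have h3 : (lam₁ - lam₂) * ((cutEnergy G g Q - deviation f Q) -
        (cutEnergy G g T - deviation f T)) = 0 := by linear_combination e1 - e2
    have hcd : cutEnergy G g Q - deviation f Q = cutEnergy G g T - deviation f T := by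
      rcases mul_eq_zero.mp h3 with h | h
      · exact absurd h (by intro h'; apply hd; linarith)
      · linarith
    have hdev : deviation f Q = deviation f T := by linear_combination e1 - lam₁ * hcd
    have hcut : cutEnergy G g Q = cutEnergy G g T := by linarith
    rw [hdev, hcut]

end Districting
end

section
/- Fix N and suppose that no two N-partitions of Γ with distinct vertex partitions have equal energy at two distinct values of λ, i.e., there is no pair of N-partitions {Γ_k}, {Γ'_k} with different vertex partitions and values λ₁ ≠ λ₂ in [0,1] with F_{λ₁}({Γ_k}) = F_{λ₁}({Γ'_k}) and F_{λ₂}({Γ_k}) = F_{λ₂}({Γ'_k}). Then there is a finite set T ⊂ [0,1] of transition values such that for every λ ∈ [0,1] \ T the minimizer of F_λ among N-partitions is unique (as a vertex partition). -/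
/-!
Since there are only finitely many partitions, it suffices that each pair of partitions with
distinct vertex partitions ties in energy for at most one `λ`; this is exactly the hypothesis.
Off the finite set of such ties, any two minimizers have equal energy, hence the same vertex
partition.
-/

open Finset

namespace Districting

section Ties

variable {α β : Type*} (E : ℝ → α → ℝ) (key : α → β) (S : Set ℝ)

def tieSet : Set ℝ := {t | t ∈ S ∧ ∃ p q, key p ≠ key q ∧ E t p = E t q}

variable {E key S}

theorem tieSet_finite [Finite α]
    (h : ∀ p q, key p ≠ key q → (S ∩ {t | E t p = E t q}).Subsingleton) :
    (tieSet E key S).Finite := by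
  have hcover : tieSet E key S ⊆ ⋃ pq : {pq : α × α // key pq.1 ≠ key pq.2},
      S ∩ {t | E t pq.1.1 = E t pq.1.2} := by
    rintro t ⟨ht, p, q, hpq, heq⟩
    exact Set.mem_iUnion.mpr ⟨⟨(p, q), hpq⟩, ht, heq⟩
  exact (Set.finite_iUnion fun pq => (h _ _ pq.2).finite).subset hcover

theorem key_eq_of_isMin_of_notMem_tieSet {t : ℝ} (ht : t ∈ S) (hnt : t ∉ tieSet E key S)
    {p q : α} (hp : ∀ r, E t p ≤ E t r) (hq : ∀ r, E t q ≤ E t r) : key p = key q := by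
  by_contra hpq
  exact hnt ⟨ht, p, q, hpq, le_antisymm (hp q) (hq p)⟩

end Ties

section Finiteness

variable {V : Type*} {G : SimpleGraph V} {N : ℕ}

theorem Partition.part_injective :
    Function.Injective (Partition.part : Partition G N → Fin N → Finset V) := by
  rintro ⟨p, _, _, _⟩ ⟨q, _, _, _⟩ rfl
  rfl

instance [Finite V] : Finite (Partition G N) := Finite.of_injective _ Partition.part_injective

end Finiteness

theorem unique_minimizer_off_finite_set_general
    {V : Type*} [Fintype V] [DecidableEq V]
    (G : SimpleGraph V)
    (f : V → ℝ)
    (g : Sym2 V → ℝ)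
    (N : ℕ) (hne : Nonempty (Partition G N))
    (h : ¬ ∃ (P Q : Partition G N) (lam₁ lam₂ : ℝ),
        Set.range P.part ≠ Set.range Q.part ∧
        lam₁ ∈ Set.Icc (0 : ℝ) 1 ∧ lam₂ ∈ Set.Icc (0 : ℝ) 1 ∧ lam₁ ≠ lam₂ ∧
        energy G f g lam₁ P = energy G f g lam₁ Q ∧
        energy G f g lam₂ P = energy G f g lam₂ Q) :
    ∃ T : Finset ℝ, ↑T ⊆ Set.Icc (0 : ℝ) 1 ∧
      ∀ lam ∈ Set.Icc (0 : ℝ) 1, lam ∉ T →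
        ∃ P : Partition G N,
          (∀ Q : Partition G N, energy G f g lam P ≤ energy G f g lam Q) ∧
          ∀ Q : Partition G N,
            (∀ R : Partition G N, energy G f g lam Q ≤ energy G f g lam R) →
            Set.range Q.part = Set.range P.part := by
  have hfin : (tieSet (fun lam (P : Partition G N) => energy G f g lam P)
      (fun P => Set.range P.part) (Set.Icc 0 1)).Finite :=
    tieSet_finite fun P Q hPQ lam₁ h₁ lam₂ h₂ => by
      by_contra hlam
      exact h ⟨P, Q, lam₁, lam₂, hPQ, h₁.1, h₂.1, hlam, h₁.2, h₂.2⟩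
  refine ⟨hfin.toFinset, fun lam hlam => (hfin.mem_toFinset.mp hlam).1, ?_⟩
  intro lam hlam hnotT
  obtain ⟨P, hP⟩ := Finite.exists_min (energy G f g lam (N := N))
  exact ⟨P, hP, fun Q hQ =>
    key_eq_of_isMin_of_notMem_tieSet hlam (fun hmem => hnotT (hfin.mem_toFinset.mpr hmem)) hQ hP⟩

/-- if no two `N`-partitions with distinct vertex partitions have
equal energy at two distinct values of `λ` in `[0,1]`, then outside a finite set
of transition values the minimizer of `F_λ` is unique as a vertex partition. -/
theorem unique_minimizer_off_finite_set
    {V : Type*} [Fintype V] [DecidableEq V]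
    (G : SimpleGraph V) (hG : G.Connected)
    (f : V → ℝ) (hf : ∀ v, 0 < f v)
    (g : Sym2 V → ℝ) (hg : ∀ e ∈ G.edgeSet, 0 < g e)
    (N : ℕ) (hne : Nonempty (Partition G N))
    (h : ¬ ∃ (P Q : Partition G N) (lam₁ lam₂ : ℝ),
        Set.range P.part ≠ Set.range Q.part ∧
        lam₁ ∈ Set.Icc (0 : ℝ) 1 ∧ lam₂ ∈ Set.Icc (0 : ℝ) 1 ∧ lam₁ ≠ lam₂ ∧
        energy G f g lam₁ P = energy G f g lam₁ Q ∧
        energy G f g lam₂ P = energy G f g lam₂ Q) :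
    ∃ T : Finset ℝ, ↑T ⊆ Set.Icc (0 : ℝ) 1 ∧
      ∀ lam ∈ Set.Icc (0 : ℝ) 1, lam ∉ T →
        ∃ P : Partition G N,
          (∀ Q : Partition G N, energy G f g lam P ≤ energy G f g lam Q) ∧
          ∀ Q : Partition G N,
            (∀ R : Partition G N, energy G f g lam Q ≤ energy G f g lam R) →
            Set.range Q.part = Set.range P.part :=
  unique_minimizer_off_finite_set_general G f g N hne h

end Districting
end

section
/- Let Γ be the path graph on three vertexes v₁ — v₂ — v₃ with vertex weights f(v₁) = 1, f(v₂) = 1, f(v₃) = 2M where M > 1, and edge weights g(e₁,₂) = ε > 0 and g(e₂,₃) = 1. Then for every λ ∈ [0, √2/(1+√2)), every ε > 0 and every M > 1, the unique minimal 2-partition for F_λ is {{v₁, v₂}, {v₃}}; in particular v₁ and v₂ cannot be separated by the minimizer no matter how small ε is or how large M is. -/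
open Finset

namespace Districting

/-- The path graph `v₁ — v₂ — v₃` on `Fin 3` (with `v₁ = 0`, `v₂ = 1`, `v₃ = 2`). -/
def pathGraph3 : SimpleGraph (Fin 3) :=
  SimpleGraph.fromRel (fun u v => (u = 0 ∧ v = 1) ∨ (u = 1 ∧ v = 2))

lemma adj01 : pathGraph3.Adj 0 1 := by simp [pathGraph3, SimpleGraph.fromRel_adj]
lemma adj12 : pathGraph3.Adj 1 2 := by simp [pathGraph3, SimpleGraph.fromRel_adj]
lemma nadj02 : ¬ pathGraph3.Adj 0 2 := by simp [pathGraph3, SimpleGraph.fromRel_adj]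

lemma conn_single (a : Fin 3) :
    (pathGraph3.induce (({a} : Finset (Fin 3)) : Set (Fin 3))).Connected := by
  rw [SimpleGraph.connected_iff]
  refine ⟨?_, ⟨⟨a, by simp⟩⟩⟩
  intro u v
  have : u = v := by
    ext
    have hu := u.2; have hv := v.2
    simp at hu hv
    rw [hu, hv]
  rw [this]

lemma conn_pair {a b : Fin 3} (hab : pathGraph3.Adj a b) :
    (pathGraph3.induce (({a, b} : Finset (Fin 3)) : Set (Fin 3))).Connected := by
  rw [SimpleGraph.connected_iff]
  refine ⟨?_, ⟨⟨a, by simp⟩⟩⟩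
  intro u v
  have hu := u.2; have hv := v.2
  simp at hu hv
  have key : ∀ w : ({a, b} : Finset (Fin 3)) , (w : Fin 3) = a →
      ∀ z : ({a, b} : Finset (Fin 3)), (z : Fin 3) = b →
      (pathGraph3.induce (({a, b} : Finset (Fin 3)) : Set (Fin 3))).Reachable w z := by
    intro w hw z hz
    refine SimpleGraph.Adj.reachable ?_
    show pathGraph3.Adj w.val z.val
    rw [hw, hz]; exact hab
  rcases hu with hu | hu <;> rcases hv with hv | hv
  · rw [show u = v by ext; rw [hu, hv]]
  · exact key u hu v hv
  · exact (key v hv u hu).symm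
  · rw [show u = v by ext; rw [hu, hv]]

lemma not_conn_02 :
    ¬ (pathGraph3.induce (({0, 2} : Finset (Fin 3)) : Set (Fin 3))).Connected := by
  intro h
  obtain ⟨w⟩ := h.preconnected ⟨0, by simp⟩ ⟨2, by simp⟩
  cases w
  rename_i x h p
  have hx := x.2
  have hadj : pathGraph3.Adj 0 x.val := h
  simp at hx
  rcases hx with hx | hx <;> rw [hx] at hadj
  · exact pathGraph3.loopless.irrefl 0 hadj
  · exact nadj02 hadj

lemma classify (P : Partition pathGraph3 2) :
    (P.part 0 = {0} ∧ P.part 1 = {1, 2}) ∨ (P.part 0 = {1, 2} ∧ P.part 1 = {0}) ∨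
    (P.part 0 = {0, 1} ∧ P.part 1 = {2}) ∨ (P.part 0 = {2} ∧ P.part 1 = {0, 1}) := by
  have hmem : ∀ v, v ∈ P.part 1 ↔ v ∉ P.part 0 := by
    intro v
    constructor
    · intro h1 h0
      exact Finset.disjoint_left.mp (P.disj 0 1 (by decide)) h0 h1
    · intro h0
      obtain ⟨k, hk⟩ := P.covers v
      fin_cases k
      · exact absurd hk h0
      · exact hk
  have hne : ∀ k, (P.part k).Nonempty := by
    intro k
    obtain ⟨⟨v, hv⟩⟩ := (P.connected k).nonempty
    exact ⟨v, hv⟩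
  by_cases h0 : (0 : Fin 3) ∈ P.part 0 <;>
    by_cases h1 : (1 : Fin 3) ∈ P.part 0 <;>
    by_cases h2 : (2 : Fin 3) ∈ P.part 0
  · exfalso
    obtain ⟨v, hv⟩ := hne 1
    rw [hmem] at hv
    fin_cases v <;> simp_all
  · refine Or.inr (Or.inr (Or.inl ⟨?_, ?_⟩)) <;>
      · ext v; fin_cases v <;> simp [hmem, h0, h1, h2]
  · exfalso
    have hp : P.part 0 = {0, 2} := by ext v; fin_cases v <;> simp [h0, h1, h2]
    have := P.connected 0
    rw [hp] at this
    exact not_conn_02 this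
  · refine Or.inl ⟨?_, ?_⟩ <;>
      · ext v; fin_cases v <;> simp [hmem, h0, h1, h2]
  · refine Or.inr (Or.inl ⟨?_, ?_⟩) <;>
      · ext v; fin_cases v <;> simp [hmem, h0, h1, h2]
  · exfalso
    have hp : P.part 1 = {0, 2} := by ext v; fin_cases v <;> simp [hmem, h0, h1, h2]
    have := P.connected 1
    rw [hp] at this
    exact not_conn_02 this
  · refine Or.inr (Or.inr (Or.inr ⟨?_, ?_⟩)) <;>
      · ext v; fin_cases v <;> simp [hmem, h0, h1, h2]
  · exfalso
    obtain ⟨v, hv⟩ := hne 0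
    fin_cases v <;> simp_all

lemma cut_eq (g : Sym2 (Fin 3) → ℝ) (P : Partition pathGraph3 2)
    (A B : Finset (Fin 3)) (e₀ : Sym2 (Fin 3))
    (h0 : P.part 0 = A) (h1 : P.part 1 = B)
    (hpos : e₀ ∈ pathGraph3.edgeSet ∧ ¬ (∀ v ∈ e₀, v ∈ A) ∧ ¬ (∀ v ∈ e₀, v ∈ B))
    (hneg : ∀ x y : Fin 3, s(x, y) ≠ e₀ →
      ¬ (s(x, y) ∈ pathGraph3.edgeSet ∧ ¬ (∀ v ∈ s(x, y), v ∈ A) ∧ ¬ (∀ v ∈ s(x, y), v ∈ B))) :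
    cutEnergy pathGraph3 g P = g e₀ := by
  classical
  unfold cutEnergy
  rw [Finset.sum_eq_single e₀]
  · rw [if_pos]
    refine ⟨hpos.1, ?_⟩
    rw [Fin.forall_fin_two, h0, h1]
    exact ⟨hpos.2.1, hpos.2.2⟩
  · intro b _ hb
    induction b using Sym2.ind with
    | _ x y =>
      rw [if_neg]
      rw [Fin.forall_fin_two, h0, h1]
      intro ⟨he, hk⟩
      exact hneg x y hb ⟨he, hk.1, hk.2⟩
  · intro h; exact absurd (Finset.mem_univ e₀) h

lemma cut_good (g : Sym2 (Fin 3) → ℝ) (P : Partition pathGraph3 2)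
    (h : (P.part 0 = {0, 1} ∧ P.part 1 = {2}) ∨ (P.part 0 = {2} ∧ P.part 1 = {0, 1})) :
    cutEnergy pathGraph3 g P = g s(1, 2) := by
  rcases h with ⟨h0, h1⟩ | ⟨h0, h1⟩ <;>
  · refine cut_eq g P _ _ _ h0 h1 ⟨?_, ?_, ?_⟩ ?_
    · rw [SimpleGraph.mem_edgeSet]; simp [pathGraph3, SimpleGraph.fromRel_adj]
    · simp [Sym2.forall_mem_pair]
    · simp [Sym2.forall_mem_pair]
    · intro x y hb
      fin_cases x <;> fin_cases y <;>
        simp_all [Sym2.forall_mem_pair, SimpleGraph.mem_edgeSet, pathGraph3,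
          SimpleGraph.fromRel_adj, Sym2.eq_iff]

lemma cut_bad (g : Sym2 (Fin 3) → ℝ) (P : Partition pathGraph3 2)
    (h : (P.part 0 = {0} ∧ P.part 1 = {1, 2}) ∨ (P.part 0 = {1, 2} ∧ P.part 1 = {0})) :
    cutEnergy pathGraph3 g P = g s(0, 1) := by
  rcases h with ⟨h0, h1⟩ | ⟨h0, h1⟩ <;>
  · refine cut_eq g P _ _ _ h0 h1 ⟨?_, ?_, ?_⟩ ?_
    · rw [SimpleGraph.mem_edgeSet]; simp [pathGraph3, SimpleGraph.fromRel_adj]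
    · simp [Sym2.forall_mem_pair]
    · simp [Sym2.forall_mem_pair]
    · intro x y hb
      fin_cases x <;> fin_cases y <;>
        simp_all [Sym2.forall_mem_pair, SimpleGraph.mem_edgeSet, pathGraph3,
          SimpleGraph.fromRel_adj, Sym2.eq_iff]

lemma dev_eq (f : Fin 3 → ℝ) (P : Partition pathGraph3 2) (A B : Finset (Fin 3))
    (h0 : P.part 0 = A) (h1 : P.part 1 = B) :
    deviation f P = Real.sqrt ((mass f A - totalMass f / 2) ^ 2
      + (mass f B - totalMass f / 2) ^ 2) := by
  unfold deviation
  rw [Fin.sum_univ_two, h0, h1]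
  norm_num

/-- Remark `split`: on the path `v₁ — v₂ — v₃` with weights
`f(v₁) = f(v₂) = 1`, `f(v₃) = 2M` (`M > 1`), `g(e₁₂) = ε > 0`, `g(e₂₃) = 1`,
for every `λ ∈ [0, √2/(1+√2))` the unique minimal `2`-partition is
`{{v₁, v₂}, {v₃}}`, no matter how small `ε` or how large `M` is. -/
theorem leftmost_vertexes_stick_together
    (M ε : ℝ) (hM : 1 < M) (hε : 0 < ε)
    (f : Fin 3 → ℝ) (hf₀ : f 0 = 1) (hf₁ : f 1 = 1) (hf₂ : f 2 = 2 * M)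
    (g : Sym2 (Fin 3) → ℝ) (hg₀₁ : g s(0, 1) = ε) (hg₁₂ : g s(1, 2) = 1)
    (lam : ℝ) (hlam₀ : 0 ≤ lam) (hlam₁ : lam < Real.sqrt 2 / (1 + Real.sqrt 2)) :
    ∀ P : Partition pathGraph3 2,
      (∀ Q : Partition pathGraph3 2,
          energy pathGraph3 f g lam P ≤ energy pathGraph3 f g lam Q) ↔
        Set.range P.part
          = ({({0, 1} : Finset (Fin 3)), ({2} : Finset (Fin 3))} :
              Set (Finset (Fin 3))) := by
  have hs2 : (0:ℝ) < Real.sqrt 2 := Real.sqrt_pos.mpr (by norm_num)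
  have hs2sq : Real.sqrt 2 ^ 2 = 2 := Real.sq_sqrt (by norm_num)
  have htot : totalMass f = 2 + 2 * M := by
    rw [totalMass, Fin.sum_univ_three, hf₀, hf₁, hf₂]; ring
  have hm01 : mass f ({0, 1} : Finset (Fin 3)) = 2 := by
    rw [mass, Finset.sum_pair (by decide), hf₀, hf₁]; norm_num
  have hm2 : mass f ({2} : Finset (Fin 3)) = 2 * M := by
    rw [mass, Finset.sum_singleton, hf₂]
  have hm0 : mass f ({0} : Finset (Fin 3)) = 1 := by
    rw [mass, Finset.sum_singleton, hf₀]
  have hm12 : mass f ({1, 2} : Finset (Fin 3)) = 1 + 2 * M := by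
    rw [mass, Finset.sum_pair (by decide), hf₁, hf₂]
  -- energy values
  have hgood : ∀ P : Partition pathGraph3 2,
      (P.part 0 = {0, 1} ∧ P.part 1 = {2}) ∨ (P.part 0 = {2} ∧ P.part 1 = {0, 1}) →
      energy pathGraph3 f g lam P = lam + (1 - lam) * (Real.sqrt 2 * (M - 1)) := by
    intro P h
    have hdev : deviation f P = Real.sqrt 2 * (M - 1) := by
      rcases h with ⟨h0, h1⟩ | ⟨h0, h1⟩
      · rw [dev_eq f P _ _ h0 h1, hm01, hm2, htot,
          show (2 - (2 + 2*M)/2)^2 + (2*M - (2 + 2*M)/2)^2 = 2 * (M-1)^2 by ring,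
          Real.sqrt_mul (by norm_num), Real.sqrt_sq (by linarith)]
      · rw [dev_eq f P _ _ h0 h1, hm01, hm2, htot,
          show (2*M - (2 + 2*M)/2)^2 + (2 - (2 + 2*M)/2)^2 = 2 * (M-1)^2 by ring,
          Real.sqrt_mul (by norm_num), Real.sqrt_sq (by linarith)]
    rw [energy, cut_good g P h, hg₁₂, hdev]; ring
  have hbad : ∀ P : Partition pathGraph3 2,
      (P.part 0 = {0} ∧ P.part 1 = {1, 2}) ∨ (P.part 0 = {1, 2} ∧ P.part 1 = {0}) →
      energy pathGraph3 f g lam P = lam * ε + (1 - lam) * (Real.sqrt 2 * M) := by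
    intro P h
    have hdev : deviation f P = Real.sqrt 2 * M := by
      rcases h with ⟨h0, h1⟩ | ⟨h0, h1⟩
      · rw [dev_eq f P _ _ h0 h1, hm0, hm12, htot,
          show (1 - (2 + 2*M)/2)^2 + (1 + 2*M - (2 + 2*M)/2)^2 = 2 * M^2 by ring,
          Real.sqrt_mul (by norm_num), Real.sqrt_sq (by linarith)]
      · rw [dev_eq f P _ _ h0 h1, hm0, hm12, htot,
          show (1 + 2*M - (2 + 2*M)/2)^2 + (1 - (2 + 2*M)/2)^2 = 2 * M^2 by ring,
          Real.sqrt_mul (by norm_num), Real.sqrt_sq (by linarith)]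
    rw [energy, cut_bad g P h, hg₀₁, hdev]
  -- the strict inequality between the two possible energy values
  have hlt : lam + (1 - lam) * (Real.sqrt 2 * (M - 1))
      < lam * ε + (1 - lam) * (Real.sqrt 2 * M) := by
    rw [lt_div_iff₀ (by positivity)] at hlam₁
    nlinarith [mul_nonneg hlam₀ hε.le]
  -- the good partition
  have hQex : ∃ Q : Partition pathGraph3 2,
      Q.part 0 = {0, 1} ∧ Q.part 1 = {2} := by
    refine ⟨⟨![{0, 1}, {2}], ?_, ?_, ?_⟩, rfl, rfl⟩
    · intro k l hkl
      fin_cases k <;> fin_cases l <;> first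
        | exact absurd rfl hkl
        | decide
    · intro v
      fin_cases v
      · exact ⟨0, by decide⟩
      · exact ⟨0, by decide⟩
      · exact ⟨1, by decide⟩
    · intro k
      fin_cases k
      · exact conn_pair adj01
      · exact conn_single 2
  obtain ⟨Q₀, hQ₀⟩ := hQex
  have hQ₀e : energy pathGraph3 f g lam Q₀ = lam + (1 - lam) * (Real.sqrt 2 * (M - 1)) :=
    hgood Q₀ (Or.inl hQ₀)
  intro P
  have hrange : Set.range P.part = {P.part 0, P.part 1} := by
    ext s
    simp only [Set.mem_range, Fin.exists_fin_two, Set.mem_insert_iff, Set.mem_singleton_iff]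
    tauto
  constructor
  · intro hmin
    rcases classify P with h | h | h | h
    · exfalso
      have h1 := hmin Q₀
      rw [hQ₀e, hbad P (Or.inl h)] at h1
      linarith
    · exfalso
      have h1 := hmin Q₀
      rw [hQ₀e, hbad P (Or.inr h)] at h1
      linarith
    · rw [hrange, h.1, h.2]
    · rw [hrange, h.1, h.2, Set.pair_comm]
  · intro hr Q
    have hgoodP : (P.part 0 = {0, 1} ∧ P.part 1 = {2}) ∨
        (P.part 0 = {2} ∧ P.part 1 = {0, 1}) := by
      have hP0 : P.part 0 ∈ ({({0, 1} : Finset (Fin 3)), ({2} : Finset (Fin 3))} :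
          Set (Finset (Fin 3))) := by rw [← hr]; exact Set.mem_range_self 0
      rcases classify P with h | h | h | h
      · exfalso; rw [h.1] at hP0; revert hP0; simp; decide
      · exfalso; rw [h.1] at hP0; revert hP0; simp; decide
      · exact Or.inl h
      · exact Or.inr h
    rw [hgood P hgoodP]
    rcases classify Q with h | h | h | h
    · rw [hbad Q (Or.inl h)]; linarith
    · rw [hbad Q (Or.inr h)]; linarith
    · rw [hgood Q (Or.inl h)]
    · rw [hgood Q (Or.inr h)]

end Districting
end

section
/- Let v be a vertex of the finite, simple, undirected, connected graph Γ such that the graph obtained from Γ by removing v and all edges incident to v has exactly N + l connected components, for integers N ≥ 1 and l ≥ 0. Then in every N-partition of Γ, at least l + 1 of these connected components have their vertex set entirely contained in the subgraph of the partition that contains v. -/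
open Finset

namespace Districting

/-- pigeonhole: if removing the vertex `v` from the connected graph
`Γ` leaves exactly `N + l` connected components, then in every `N`-partition at
least `l + 1` of these components are entirely contained in the part containing
`v`. -/
theorem pigeonhole_components
    {V : Type*} [Fintype V] [DecidableEq V]
    (G : SimpleGraph V) (hG : G.Connected) (v : V)
    (N l : ℕ) (hN : 1 ≤ N)
    (hcomp : Nat.card (G.induce ({v}ᶜ : Set V)).ConnectedComponent = N + l) :
    ∀ P : Partition G N, ∀ k : Fin N, v ∈ P.part k →
      l + 1 ≤ Nat.card
        {C : (G.induce ({v}ᶜ : Set V)).ConnectedComponent //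
          ∀ w : ({v}ᶜ : Set V),
            (G.induce ({v}ᶜ : Set V)).connectedComponentMk w = C →
              (w : V) ∈ P.part k} := by
  classical
  intro P k hvk
  set G' := G.induce ({v}ᶜ : Set V) with hG'
  -- parts other than k avoid v
  have hsub : ∀ j : Fin N, j ≠ k → (P.part j : Set V) ⊆ ({v}ᶜ : Set V) := by
    intro j hj x hx hxv
    simp only [Set.mem_singleton_iff] at hxv
    subst hxv
    exact Finset.disjoint_left.1 (P.disj j k hj) hx hvk
  -- vertices of a part j ≠ k lie in the same component of G'
  have key : ∀ j : Fin N, j ≠ k → ∀ (w₁ w₂ : ({v}ᶜ : Set V)),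
      (w₁ : V) ∈ P.part j → (w₂ : V) ∈ P.part j →
      G'.connectedComponentMk w₁ = G'.connectedComponentMk w₂ := by
    intro j hj w₁ w₂ h₁ h₂
    have hr : (G.induce (P.part j : Set V)).Reachable ⟨w₁, h₁⟩ ⟨w₂, h₂⟩ :=
      (P.connected j) ⟨w₁, h₁⟩ ⟨w₂, h₂⟩
    have hr' : G'.Reachable w₁ w₂ := by
      have := hr.map (G.induceHomOfLE (by exact_mod_cast hsub j hj)).toHom
      exact this
    exact SimpleGraph.ConnectedComponent.sound hr'
  set good : G'.ConnectedComponent → Prop := fun C =>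
    ∀ w : ({v}ᶜ : Set V), G'.connectedComponentMk w = C → (w : V) ∈ P.part k
  -- injection from bad components into parts ≠ k
  have hinj : ∃ f : {C : G'.ConnectedComponent // ¬ good C} → {j : Fin N // j ≠ k},
      Function.Injective f := by
    have hw : ∀ C : {C : G'.ConnectedComponent // ¬ good C},
        ∃ p : ({v}ᶜ : Set V) × Fin N, G'.connectedComponentMk p.1 = C.1 ∧
          (p.1 : V) ∈ P.part p.2 ∧ p.2 ≠ k := by
      rintro ⟨C, hC⟩
      simp only [good, not_forall] at hC
      obtain ⟨w, hwC, hwk⟩ := hC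
      obtain ⟨j, hj⟩ := P.covers w
      exact ⟨⟨w, j⟩, hwC, hj, fun h => hwk (h ▸ hj)⟩
    choose p hp1 hp2 hp3 using hw
    refine ⟨fun C => ⟨(p C).2, hp3 C⟩, ?_⟩
    intro C₁ C₂ h
    have hj : (p C₁).2 = (p C₂).2 := congrArg Subtype.val h
    have := key (p C₁).2 (hp3 C₁) (p C₁).1 (p C₂).1 (hp2 C₁) (hj ▸ hp2 C₂)
    exact Subtype.ext ((hp1 C₁).symm.trans (this.trans (hp1 C₂)))
  obtain ⟨f, hf⟩ := hinj
  have hbad : Nat.card {C : G'.ConnectedComponent // ¬ good C} ≤ N - 1 := by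
    have := Nat.card_le_card_of_injective f hf
    have hcard : Nat.card {j : Fin N // j ≠ k} = N - 1 := by
      rw [Nat.card_eq_fintype_card, Fintype.card_subtype_compl,
        Fintype.card_subtype_eq, Fintype.card_fin]
    omega
  have : Nat.card {C : G'.ConnectedComponent // good C} +
      Nat.card {C : G'.ConnectedComponent // ¬ good C} =
      Nat.card G'.ConnectedComponent := by
    have := Fintype.ofFinite G'.ConnectedComponent
    simp only [Nat.card_eq_fintype_card]
    rw [Fintype.card_subtype_compl]
    have hle : Fintype.card {C : G'.ConnectedComponent // good C} ≤
        Fintype.card G'.ConnectedComponent := Fintype.card_subtype_le _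
    omega
  rw [hcomp] at this
  show l + 1 ≤ Nat.card {C : G'.ConnectedComponent // good C}
  omega

end Districting
end

section
/- Let 1 ≤ p ≤ q ≤ ∞ and let D be a 2-partition of Γ whose deviation σ_∞(D) is minimal among all 2-partitions of Γ. If for some λ ∈ [0,1] the partition D minimizes F_{λ,q} among all 2-partitions, then D also minimizes F_{λ,p} among all 2-partitions. Consequently, for 2-partitions the first transition value λ^F(p, Γ) (the largest λ up to which some deviation-minimal 2-partition remains a minimizer of F_{λ,p}) is nonincreasing in p. -/
open Finset

namespace Districting

/-- The `p`-deviation energy (`p`-th central moment) of a partition, `p ∈ [1,∞)`. -/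
noncomputable def pDeviation {V : Type*} [Fintype V] [DecidableEq V]
    {G : SimpleGraph V} (f : V → ℝ) (p : ℝ) {N : ℕ} (P : Partition G N) : ℝ :=
  (∑ k : Fin N, |mass f (P.part k) - totalMass f / (N : ℝ)| ^ p) ^ (1 / p)

/-- The `∞`-deviation energy of a partition. -/
noncomputable def infDeviation {V : Type*} [Fintype V] [DecidableEq V]
    {G : SimpleGraph V} (f : V → ℝ) {N : ℕ} (P : Partition G N) : ℝ :=
  ⨆ k : Fin N, |mass f (P.part k) - totalMass f / (N : ℝ)|

/-- The energy functional `F_{λ,p}` with `p`-deviation penalization. -/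
noncomputable def energyP {V : Type*} [Fintype V] [DecidableEq V]
    (G : SimpleGraph V) (f : V → ℝ) (g : Sym2 V → ℝ)
    (lam p : ℝ) {N : ℕ} (P : Partition G N) : ℝ :=
  lam * cutEnergy G g P + (1 - lam) * pDeviation f p P

/-- The energy functional `F_{λ,∞}` with `∞`-deviation penalization. -/
noncomputable def energyInf {V : Type*} [Fintype V] [DecidableEq V]
    (G : SimpleGraph V) (f : V → ℝ) (g : Sym2 V → ℝ)
    (lam : ℝ) {N : ℕ} (P : Partition G N) : ℝ :=
  lam * cutEnergy G g P + (1 - lam) * infDeviation f P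

end Districting

namespace Districting

/-- The first transition value `λ^F(p, Γ)`: the largest `λ` up to which some
deviation-minimal `2`-partition remains a minimizer of `F_{λ,p}`. -/
noncomputable def firstTransition {V : Type*} [Fintype V] [DecidableEq V]
    (G : SimpleGraph V) (f : V → ℝ) (g : Sym2 V → ℝ) (p : ℝ) : ℝ :=
  sSup {lam : ℝ | lam ∈ Set.Icc (0 : ℝ) 1 ∧
    ∃ D : Partition G 2,
      (∀ Q : Partition G 2, infDeviation f D ≤ infDeviation f Q) ∧
      ∀ Q : Partition G 2, energyP G f g lam p D ≤ energyP G f g lam p Q}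

/-!
For a `2`-partition the two masses sum to `M(Γ)`, so both deviations from `M(Γ)/2` have the same
absolute value `σ_∞`, and `σ_p = 2^{1/p} σ_∞`. Hence `F_{λ,p} = λ P + (1 - λ) 2^{1/p} σ_∞` with a
coefficient that decreases in `p`. Passing from `q` to `p ≤ q` adds a nonnegative multiple of
`σ_∞`, which a deviation-minimal partition also minimizes, so minimality survives.
-/

theorem add_mul_le_add_mul_of_le {α : Type*} {A S : α → ℝ} {a b : ℝ} {x : α} (hab : a ≤ b)
    (hS : ∀ y, S x ≤ S y) (h : ∀ y, A x + a * S x ≤ A y + a * S y) (y : α) :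
    A x + b * S x ≤ A y + b * S y := by
  linear_combination h y + mul_le_mul_of_nonneg_left (hS y) (sub_nonneg.2 hab)

theorem sSup_le_sSup_of_subset_of_nonneg {s t : Set ℝ} (hst : s ⊆ t) (ht : BddAbove t)
    (ht₀ : ∀ x ∈ t, 0 ≤ x) : sSup s ≤ sSup t :=
  Real.sSup_le (fun _ hx => le_csSup ht (hst hx)) (Real.sSup_nonneg ht₀)

section TwoPartition

variable {V : Type*} [Fintype V] [DecidableEq V] {G : SimpleGraph V} (f : V → ℝ)
  (P : Partition G 2)

theorem mass_part_zero_add_mass_part_one :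
    mass f (P.part 0) + mass f (P.part 1) = totalMass f := by
  have hunion : P.part 0 ∪ P.part 1 = univ := by
    refine eq_univ_of_forall fun v => ?_
    obtain ⟨k, hk⟩ := P.covers v
    fin_cases k
    exacts [mem_union_left _ hk, mem_union_right _ hk]
  rw [mass, mass, ← sum_union (P.disj 0 1 (by decide)), hunion, totalMass]

theorem abs_mass_part_one_sub_half :
    |mass f (P.part 1) - totalMass f / ((2 : ℕ) : ℝ)|
      = |mass f (P.part 0) - totalMass f / ((2 : ℕ) : ℝ)| := by
  rw [← abs_neg]
  congr 1
  linear_combination (-1 : ℝ) * mass_part_zero_add_mass_part_one f P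

theorem infDeviation_two :
    infDeviation f P = |mass f (P.part 0) - totalMass f / ((2 : ℕ) : ℝ)| := by
  have hconst : (fun k : Fin 2 => |mass f (P.part k) - totalMass f / ((2 : ℕ) : ℝ)|)
      = fun _ => |mass f (P.part 0) - totalMass f / ((2 : ℕ) : ℝ)| := by
    funext k
    fin_cases k
    exacts [rfl, abs_mass_part_one_sub_half f P]
  rw [infDeviation, hconst, ciSup_const]

theorem pDeviation_two {p : ℝ} (hp : p ≠ 0) :
    pDeviation f p P = (2 : ℝ) ^ (1 / p) * infDeviation f P := by
  set d := |mass f (P.part 0) - totalMass f / ((2 : ℕ) : ℝ)|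
  have hd : 0 ≤ d := abs_nonneg _
  rw [pDeviation, infDeviation_two, Fin.sum_univ_two, abs_mass_part_one_sub_half, ← two_mul,
    Real.mul_rpow zero_le_two (Real.rpow_nonneg hd p), ← Real.rpow_mul hd, mul_one_div_cancel hp,
    Real.rpow_one]

theorem energyP_two (g : Sym2 V → ℝ) (lam : ℝ) {p : ℝ} (hp : p ≠ 0) :
    energyP G f g lam p P = lam * cutEnergy G g P + (1 - lam) * 2 ^ (1 / p) * infDeviation f P := by
  rw [energyP, pDeviation_two f P hp, mul_assoc]

variable {f} (g : Sym2 V → ℝ) {lam : ℝ} {D : Partition G 2}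

theorem energyP_le_of_energyP_le {p q : ℝ} (hp : 0 < p) (hpq : p ≤ q)
    (hD : ∀ Q : Partition G 2, infDeviation f D ≤ infDeviation f Q) (hlam : lam ≤ 1)
    (hq : ∀ Q : Partition G 2, energyP G f g lam q D ≤ energyP G f g lam q Q)
    (Q : Partition G 2) : energyP G f g lam p D ≤ energyP G f g lam p Q := by
  have hcoeff : (1 - lam) * (2 : ℝ) ^ (1 / q) ≤ (1 - lam) * 2 ^ (1 / p) :=
    mul_le_mul_of_nonneg_left
      (Real.rpow_le_rpow_of_exponent_le one_le_two (one_div_le_one_div_of_le hp hpq))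
      (sub_nonneg.2 hlam)
  simp only [energyP_two f _ g lam hp.ne', energyP_two f _ g lam (hp.trans_le hpq).ne'] at hq ⊢
  exact add_mul_le_add_mul_of_le (A := fun Q => lam * cutEnergy G g Q) hcoeff hD hq Q

theorem energyP_le_of_energyInf_le {p : ℝ} (hp : 0 < p)
    (hD : ∀ Q : Partition G 2, infDeviation f D ≤ infDeviation f Q) (hlam : lam ≤ 1)
    (hinf : ∀ Q : Partition G 2, energyInf G f g lam D ≤ energyInf G f g lam Q)
    (Q : Partition G 2) : energyP G f g lam p D ≤ energyP G f g lam p Q := by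
  have hcoeff : 1 - lam ≤ (1 - lam) * 2 ^ (1 / p) :=
    le_mul_of_one_le_right (sub_nonneg.2 hlam) (Real.one_le_rpow one_le_two (by positivity))
  simp only [energyP_two f _ g lam hp.ne']
  exact add_mul_le_add_mul_of_le (A := fun Q => lam * cutEnergy G g Q) hcoeff hD hinf Q

theorem firstTransition_le_firstTransition {p q : ℝ} (hp : 0 < p) (hpq : p ≤ q) :
    firstTransition G f g q ≤ firstTransition G f g p := by
  refine sSup_le_sSup_of_subset_of_nonneg ?_ ⟨1, fun _ h => h.1.2⟩ fun _ h => h.1.1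
  rintro lam ⟨hlam, D, hD, hq⟩
  exact ⟨hlam, D, hD, energyP_le_of_energyP_le g hp hpq hD hlam.2 hq⟩

end TwoPartition

theorem first_transition_monotone_general
    {V : Type*} [Fintype V] [DecidableEq V]
    (G : SimpleGraph V)
    (f : V → ℝ)
    (g : Sym2 V → ℝ) :
    (∀ p q : ℝ, 1 ≤ p → p ≤ q →
      ∀ D : Partition G 2,
        (∀ Q : Partition G 2, infDeviation f D ≤ infDeviation f Q) →
        ∀ lam ∈ Set.Icc (0 : ℝ) 1,
          (∀ Q : Partition G 2, energyP G f g lam q D ≤ energyP G f g lam q Q) →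
          (∀ Q : Partition G 2, energyP G f g lam p D ≤ energyP G f g lam p Q)) ∧
      (∀ p : ℝ, 1 ≤ p →
        ∀ D : Partition G 2,
          (∀ Q : Partition G 2, infDeviation f D ≤ infDeviation f Q) →
          ∀ lam ∈ Set.Icc (0 : ℝ) 1,
            (∀ Q : Partition G 2, energyInf G f g lam D ≤ energyInf G f g lam Q) →
            (∀ Q : Partition G 2, energyP G f g lam p D ≤ energyP G f g lam p Q)) ∧
      (∀ p q : ℝ, 1 ≤ p → p ≤ q →
        firstTransition G f g q ≤ firstTransition G f g p) := by
  have hp₀ {p : ℝ} (hp : 1 ≤ p) : 0 < p := zero_lt_one.trans_le hp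
  exact ⟨fun p q hp hpq D hD lam hlam => energyP_le_of_energyP_le g (hp₀ hp) hpq hD hlam.2,
    fun p hp D hD lam hlam => energyP_le_of_energyInf_le g (hp₀ hp) hD hlam.2,
    fun p q hp hpq => firstTransition_le_firstTransition g (hp₀ hp) hpq⟩

/-- for `1 ≤ p ≤ q ≤ ∞`, a deviation-minimal `2`-partition which
minimizes `F_{λ,q}` also minimizes `F_{λ,p}`; consequently the first transition
value `λ^F(p, Γ)` for `2`-partitions is nonincreasing in `p`. -/
theorem first_transition_monotone
    {V : Type*} [Fintype V] [DecidableEq V]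
    (G : SimpleGraph V) (hG : G.Connected)
    (f : V → ℝ) (hf : ∀ v, 0 < f v)
    (g : Sym2 V → ℝ) (hg : ∀ e ∈ G.edgeSet, 0 < g e) :
    (∀ p q : ℝ, 1 ≤ p → p ≤ q →
      ∀ D : Partition G 2,
        (∀ Q : Partition G 2, infDeviation f D ≤ infDeviation f Q) →
        ∀ lam ∈ Set.Icc (0 : ℝ) 1,
          (∀ Q : Partition G 2, energyP G f g lam q D ≤ energyP G f g lam q Q) →
          (∀ Q : Partition G 2, energyP G f g lam p D ≤ energyP G f g lam p Q)) ∧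
      (∀ p : ℝ, 1 ≤ p →
        ∀ D : Partition G 2,
          (∀ Q : Partition G 2, infDeviation f D ≤ infDeviation f Q) →
          ∀ lam ∈ Set.Icc (0 : ℝ) 1,
            (∀ Q : Partition G 2, energyInf G f g lam D ≤ energyInf G f g lam Q) →
            (∀ Q : Partition G 2, energyP G f g lam p D ≤ energyP G f g lam p Q)) ∧
      (∀ p q : ℝ, 1 ≤ p → p ≤ q →
        firstTransition G f g q ≤ firstTransition G f g p) :=
  first_transition_monotone_general G f g

end Districting
end

section
/- Let Γ̂ be the 4-cycle a — b — a' — b' — a with vertex weights f(a) = f(a') = 9, f(b) = f(b') = 1 and all four edge weights equal to 1. Then the two 2-partitions {{a,b},{a',b'}} and {{a,b'},{a',b}} (each district consisting of one weight-9 and one adjacent weight-1 vertex, hence of mass 10, with cut energy 2 and deviation energy 0) minimize F_λ for every λ ∈ [0,1], and for every λ ∈ (0,1) they are the only minimal 2-partitions of Γ̂. -/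
open Finset

namespace Districting

/-- The 4-cycle `a — b — a' — b' — a`, with `a = 0`, `b = 1`, `a' = 2`, `b' = 3`. -/
def cycleGraph4 : SimpleGraph (Fin 4) :=
  SimpleGraph.fromRel (fun u v => v = u + 1)

/-! A `2`-partition is determined by its first part `s`, the second being `sᶜ`. The total mass
is `20`, so the deviation is `√2 · |M(s) - 10|`; it vanishes exactly when `s` is one of the four
adjacent pairs `{i, i + 1}`. A proper nonempty vertex set of a cycle is left and re-entered at
least once, so at least two unit edges are cut, and an adjacent pair cuts exactly two. Hence
`F_λ ≥ 2λ`, with equality at the balanced partitions, and for `0 < λ < 1` equality forces the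
deviation to vanish. -/

namespace Partition

variable {V : Type*} {G : SimpleGraph V}

lemma part_nonempty {N : ℕ} (P : Partition G N) (k : Fin N) : (P.part k).Nonempty := by
  obtain ⟨⟨v, hv⟩⟩ := (P.connected k).nonempty
  exact ⟨v, hv⟩

variable [Fintype V] [DecidableEq V]

lemma part_one_eq_compl (P : Partition G 2) : P.part 1 = (P.part 0)ᶜ := by
  ext v
  rw [mem_compl]
  refine ⟨fun h₁ h₀ => disjoint_left.mp (P.disj 0 1 (by decide)) h₀ h₁, fun h₀ => ?_⟩
  obtain ⟨k, hk⟩ := P.covers v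
  fin_cases k
  · exact absurd hk h₀
  · exact hk

lemma range_part_eq_pair_iff (P : Partition G 2) (A B : Finset V) :
    Set.range P.part = {A, B} ↔ ({P.part 0, (P.part 0)ᶜ} : Finset (Finset V)) = {A, B} := by
  rw [← coe_inj, coe_insert, coe_insert, coe_singleton, coe_singleton, ← part_one_eq_compl]
  have hrange : Set.range P.part = {P.part 0, P.part 1} := by
    ext; simp [Fin.exists_fin_two, eq_comm]
  rw [hrange]

lemma forall_not_subset_part_iff (P : Partition G 2) (u v : V) :
    (∀ k, ¬ ∀ w ∈ s(u, v), w ∈ P.part k) ↔ ¬ (u ∈ P.part 0 ↔ v ∈ P.part 0) := by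
  simp only [Fin.forall_fin_two, part_one_eq_compl, Sym2.mem_iff, forall_eq_or_imp, forall_eq,
    mem_compl]
  tauto

def ofCompl (s : Finset V) (hs : (G.induce (s : Set V)).Connected)
    (hsc : (G.induce ((sᶜ : Finset V) : Set V)).Connected) : Partition G 2 where
  part := ![s, sᶜ]
  disj k l hkl := by
    fin_cases k <;> fin_cases l <;> simp_all [disjoint_compl_right, disjoint_compl_left]
  covers v := if h : v ∈ s then ⟨0, h⟩ else ⟨1, by simpa⟩
  connected := Fin.forall_fin_two.mpr ⟨hs, hsc⟩

end Partition

section Energy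

variable {V : Type*} {G : SimpleGraph V}

lemma deviation_nonneg [Fintype V] (f : V → ℝ) {N : ℕ} (P : Partition G N) :
    0 ≤ deviation f P :=
  Real.sqrt_nonneg _

variable [Fintype V] [DecidableEq V]

lemma deviation_eq_zero_iff (f : V → ℝ) (P : Partition G 2) :
    deviation f P = 0 ↔ mass f (P.part 0) = totalMass f / 2 := by
  have hsum : mass f (P.part 0) + mass f (P.part 1) = totalMass f := by
    rw [P.part_one_eq_compl]
    exact sum_add_sum_compl _ _
  have hdev : deviation f P = √(2 * (mass f (P.part 0) - totalMass f / 2) ^ 2) := by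
    rw [deviation, Fin.sum_univ_two, ← hsum]
    congr 1
    push_cast
    ring
  rw [hdev, Real.sqrt_eq_zero (by positivity)]
  simp [sub_eq_zero]

variable (f : V → ℝ) (g : Sym2 V → ℝ) {N : ℕ} (P : Partition G N) {lam c : ℝ}

lemma mul_le_energy (h₀ : 0 ≤ lam) (h₁ : lam ≤ 1) (hc : c ≤ cutEnergy G g P) :
    lam * c ≤ energy G f g lam P :=
  calc lam * c ≤ lam * cutEnergy G g P := mul_le_mul_of_nonneg_left hc h₀
    _ ≤ energy G f g lam P :=
      le_add_of_nonneg_right (mul_nonneg (sub_nonneg.2 h₁) (deviation_nonneg f P))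

lemma deviation_eq_zero_of_energy_le (h₀ : 0 ≤ lam) (h₁ : lam < 1)
    (hc : c ≤ cutEnergy G g P) (hE : energy G f g lam P ≤ lam * c) : deviation f P = 0 := by
  have := deviation_nonneg f P
  rw [energy] at hE
  nlinarith

end Energy

section Cycle

lemma cycleGraph4_edgeSet : cycleGraph4.edgeSet = Set.range fun i : Fin 4 => s(i, i + 1) := by
  ext e
  induction e using Sym2.ind with
  | _ u v =>
    simp only [SimpleGraph.mem_edgeSet, cycleGraph4, SimpleGraph.fromRel_adj, Set.mem_range,
      Sym2.eq_iff]
    revert u v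
    decide

lemma cycleGraph4_connected_induce_pair (i : Fin 4) :
    (cycleGraph4.induce (({i, i + 1} : Finset (Fin 4)) : Set (Fin 4))).Connected := by
  rw [coe_pair]
  refine SimpleGraph.induce_pair_connected_of_adj ?_
  rw [cycleGraph4, SimpleGraph.fromRel_adj]
  revert i
  decide

def cyclePartition (i : Fin 4) : Partition cycleGraph4 2 :=
  Partition.ofCompl {i, i + 1} (cycleGraph4_connected_induce_pair i) (by
    rw [show ({i, i + 1}ᶜ : Finset (Fin 4)) = {i + 2, i + 2 + 1} by revert i; decide]
    exact cycleGraph4_connected_induce_pair (i + 2))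

def cycleCutSize (s : Finset (Fin 4)) : ℕ := #{i : Fin 4 | ¬ (i ∈ s ↔ i + 1 ∈ s)}

-- Natural-number weights, so that the finite facts below are decided by evaluation.
def cycleWeight : Fin 4 → ℕ := ![9, 1, 9, 1]

lemma two_le_cycleCutSize :
    ∀ s : Finset (Fin 4), s.Nonempty → sᶜ.Nonempty → 2 ≤ cycleCutSize s := by
  decide

lemma cycleCutSize_eq_two_of_sum_cycleWeight :
    ∀ s : Finset (Fin 4), ∑ v ∈ s, cycleWeight v = 10 → cycleCutSize s = 2 := by
  decide

lemma sum_cycleWeight_eq_ten_iff : ∀ s : Finset (Fin 4), ∑ v ∈ s, cycleWeight v = 10 ↔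
    ({s, sᶜ} : Finset (Finset (Fin 4))) = {{0, 1}, {2, 3}} ∨
      ({s, sᶜ} : Finset (Finset (Fin 4))) = {{0, 3}, {1, 2}} := by
  decide

lemma cutEnergy_cycleGraph4 {g : Sym2 (Fin 4) → ℝ} (hg : ∀ e ∈ cycleGraph4.edgeSet, g e = 1)
    (P : Partition cycleGraph4 2) : cutEnergy cycleGraph4 g P = cycleCutSize (P.part 0) := by
  have hinj : Function.Injective fun i : Fin 4 => s(i, i + 1) := by decide
  have hmem : ∀ e,
      e ∈ univ.image (fun i : Fin 4 => s(i, i + 1)) ↔ e ∈ cycleGraph4.edgeSet := by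
    simp [cycleGraph4_edgeSet]
  rw [cutEnergy, cycleCutSize, natCast_card_filter,
    ← sum_subset (subset_univ _) fun e _ he => if_neg fun h => he ((hmem e).2 h.1),
    sum_image fun i _ j _ h => hinj h]
  refine sum_congr rfl fun i _ => ?_
  have hi := (hmem _).1 (mem_image_of_mem _ (mem_univ i))
  simp only [hi, true_and, hg _ hi, P.forall_not_subset_part_iff]

lemma two_le_cutEnergy_cycleGraph4 {g : Sym2 (Fin 4) → ℝ}
    (hg : ∀ e ∈ cycleGraph4.edgeSet, g e = 1) (P : Partition cycleGraph4 2) :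
    2 ≤ cutEnergy cycleGraph4 g P := by
  rw [cutEnergy_cycleGraph4 hg]
  exact_mod_cast two_le_cycleCutSize _ (P.part_nonempty 0)
    (P.part_one_eq_compl ▸ P.part_nonempty 1)

lemma deviation_cycleWeight_eq_zero_iff (P : Partition cycleGraph4 2) :
    deviation (fun v => (cycleWeight v : ℝ)) P = 0 ↔
      ∑ v ∈ P.part 0, cycleWeight v = 10 := by
  have htotal : totalMass (fun v => (cycleWeight v : ℝ)) = 20 := by
    rw [totalMass, ← Nat.cast_sum, show ∑ v, cycleWeight v = 20 by decide, Nat.cast_ofNat]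
  rw [deviation_eq_zero_iff, htotal, mass, ← Nat.cast_sum,
    show (20 : ℝ) / 2 = (10 : ℕ) by norm_num, Nat.cast_inj]

lemma deviation_cycleWeight_eq_zero_iff_range (P : Partition cycleGraph4 2) :
    deviation (fun v => (cycleWeight v : ℝ)) P = 0 ↔
      Set.range P.part = {{0, 1}, {2, 3}} ∨ Set.range P.part = {{0, 3}, {1, 2}} := by
  rw [deviation_cycleWeight_eq_zero_iff, sum_cycleWeight_eq_ten_iff, P.range_part_eq_pair_iff,
    P.range_part_eq_pair_iff]

lemma cutEnergy_cycleGraph4_eq_two {g : Sym2 (Fin 4) → ℝ}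
    (hg : ∀ e ∈ cycleGraph4.edgeSet, g e = 1) {P : Partition cycleGraph4 2}
    (hP : deviation (fun v => (cycleWeight v : ℝ)) P = 0) : cutEnergy cycleGraph4 g P = 2 := by
  rw [cutEnergy_cycleGraph4 hg,
    cycleCutSize_eq_two_of_sum_cycleWeight _ ((deviation_cycleWeight_eq_zero_iff P).1 hP)]
  norm_num

lemma deviation_cyclePartition (i : Fin 4) :
    deviation (fun v => (cycleWeight v : ℝ)) (cyclePartition i) = 0 :=
  (deviation_cycleWeight_eq_zero_iff _).2 (by revert i; decide)

lemma energy_cycleGraph4_eq {g : Sym2 (Fin 4) → ℝ} (hg : ∀ e ∈ cycleGraph4.edgeSet, g e = 1)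
    (lam : ℝ) {P : Partition cycleGraph4 2}
    (hP : deviation (fun v => (cycleWeight v : ℝ)) P = 0) :
    energy cycleGraph4 (fun v => (cycleWeight v : ℝ)) g lam P = lam * 2 := by
  rw [energy, cutEnergy_cycleGraph4_eq_two hg hP, hP, mul_zero, add_zero]

lemma energy_cycleGraph4_le {g : Sym2 (Fin 4) → ℝ} (hg : ∀ e ∈ cycleGraph4.edgeSet, g e = 1)
    {lam : ℝ} (hlam : lam ∈ Set.Icc (0 : ℝ) 1) {P : Partition cycleGraph4 2}
    (hP : deviation (fun v => (cycleWeight v : ℝ)) P = 0) (Q : Partition cycleGraph4 2) :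
    energy cycleGraph4 (fun v => (cycleWeight v : ℝ)) g lam P ≤
      energy cycleGraph4 (fun v => (cycleWeight v : ℝ)) g lam Q :=
  energy_cycleGraph4_eq hg lam hP ▸
    mul_le_energy _ g Q hlam.1 hlam.2 (two_le_cutEnergy_cycleGraph4 hg Q)

end Cycle

/-- Example `+-vertex`, graph `Γ̂`: on the 4-cycle with vertex
weights `9, 1, 9, 1` and unit edge weights, the two balanced `2`-partitions
`{{a,b},{a',b'}}` and `{{a,b'},{a',b}}` (mass `10`, cut energy `2`, deviation `0`)
minimize `F_λ` for every `λ ∈ [0,1]`, and for `λ ∈ (0,1)` they are the only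
minimal `2`-partitions. -/
theorem cycle4_minimal_partitions
    (f : Fin 4 → ℝ) (hf₀ : f 0 = 9) (hf₁ : f 1 = 1) (hf₂ : f 2 = 9) (hf₃ : f 3 = 1)
    (g : Sym2 (Fin 4) → ℝ) (hg : ∀ e ∈ cycleGraph4.edgeSet, g e = 1) :
    (∃ P : Partition cycleGraph4 2,
        Set.range P.part
          = ({({0, 1} : Finset (Fin 4)), ({2, 3} : Finset (Fin 4))} :
              Set (Finset (Fin 4)))) ∧
      (∃ P : Partition cycleGraph4 2,
        Set.range P.part
          = ({({0, 3} : Finset (Fin 4)), ({1, 2} : Finset (Fin 4))} :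
              Set (Finset (Fin 4)))) ∧
      (∀ P : Partition cycleGraph4 2,
        (Set.range P.part
            = ({({0, 1} : Finset (Fin 4)), ({2, 3} : Finset (Fin 4))} :
                Set (Finset (Fin 4))) ∨
          Set.range P.part
            = ({({0, 3} : Finset (Fin 4)), ({1, 2} : Finset (Fin 4))} :
                Set (Finset (Fin 4)))) →
        cutEnergy cycleGraph4 g P = 2 ∧ deviation f P = 0 ∧
          ∀ lam ∈ Set.Icc (0 : ℝ) 1, ∀ Q : Partition cycleGraph4 2,
            energy cycleGraph4 f g lam P ≤ energy cycleGraph4 f g lam Q) ∧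
      (∀ lam : ℝ, 0 < lam → lam < 1 → ∀ P : Partition cycleGraph4 2,
        (∀ Q : Partition cycleGraph4 2,
            energy cycleGraph4 f g lam P ≤ energy cycleGraph4 f g lam Q) ↔
          (Set.range P.part
              = ({({0, 1} : Finset (Fin 4)), ({2, 3} : Finset (Fin 4))} :
                  Set (Finset (Fin 4))) ∨
            Set.range P.part
              = ({({0, 3} : Finset (Fin 4)), ({1, 2} : Finset (Fin 4))} :
                  Set (Finset (Fin 4))))) := by
  obtain rfl : f = fun v => (cycleWeight v : ℝ) := by
    funext v
    fin_cases v <;> simp [cycleWeight, *]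
  refine ⟨⟨cyclePartition 0, (Partition.range_part_eq_pair_iff _ _ _).2 (by decide)⟩,
    ⟨cyclePartition 3, (Partition.range_part_eq_pair_iff _ _ _).2 (by decide)⟩,
    fun P hP => ?_, fun lam h₀ h₁ P => ?_⟩
  · have hdev := (deviation_cycleWeight_eq_zero_iff_range P).2 hP
    exact ⟨cutEnergy_cycleGraph4_eq_two hg hdev, hdev,
      fun lam hlam Q => energy_cycleGraph4_le hg hlam hdev Q⟩
  · rw [← deviation_cycleWeight_eq_zero_iff_range]
    refine ⟨fun hmin => ?_, fun hP Q => energy_cycleGraph4_le hg ⟨h₀.le, h₁.le⟩ hP Q⟩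
    refine deviation_eq_zero_of_energy_le _ g P h₀.le h₁ (two_le_cutEnergy_cycleGraph4 hg P) ?_
    exact (hmin (cyclePartition 0)).trans_eq
      (energy_cycleGraph4_eq hg lam (deviation_cyclePartition 0))

end Districting
end
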